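/- Fix strikes 0 < K_1 < … < K_N, a maturity T > 0, a barrier U > 0, a strike K ∈ (0,U], positive parameters σ^* = (σ^*_1,σ^*_2), and an index i with K_i ≤ K and K_i < U such that the index j̄ = min{ j : K_j ≥ U + (U−K_i)·σ^*_2/σ^*_1 } is well defined. Extend the Black–Scholes prices to zero time-to-maturity by C^bs(S,K',0,·) = (S−K')^+ and P^bs(S,K',0,·) = (K'−S)^+. Let S : [0,T] → ℝ be continuous with 0 ≤ S(0) ≤ U, and for each t ∈ [0,T) let Σ_t : {K_1,…,K_N} × (0,T−t] → (0,∞) be an implied-volatility function. Define H = inf{ t ∈ [0,T] : S(t) ≥ U } (with H = +∞ if this set is empty) and θ = min(H,T). Assume that for every t ∈ [0,T) with S(t) = U, the surface Σ_t satisfies the upper beliefs generated by the PCLVG implied volatility surface Σ^{σ^*} on (0,T−t]. Then the super-replication inequality holds: ((K_i−K)/(U−K_i))·(S(θ) − U) + ((U−K)/(U−K_i))·( P^bs(S(θ), K_i, T−θ, Σ_θ(K_i,T−θ)) − (K_i/U)·C^bs(S(θ), K_{j̄}, T−θ, Σ_θ(K_{j̄},T−θ)) ) ≥ (K − S(θ))^+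 · 1_{the set {t ∈ [0,T] : S(t) ≥ U} is empty}. -/

import Mathlib

/-! If the spot never reaches `U`, the portfolio is liquidated at maturity for a
piecewise-linear payoff dominating `(K - S_T)⁺`. Otherwise continuity gives `S(θ) = U`, the
forward leg vanishes, and it remains to see that `(K_i/U)·C^bs(K_{j̄}) ≤ P^bs(K_i)` at the
barrier. Black–Scholes prices increase with volatility and depend on `(σ, τ)` only through
`σ²τ`, so the upper beliefs bound the put below and the call above by PCLVG prices at
time-to-maturity `c²τ`; for these the inequality is an explicit computation. -/

open MeasureTheory Filter Set

/-- Standard normal cumulative distribution function. -/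
noncomputable def stdNormalCDF (x : ℝ) : ℝ :=
  (Real.sqrt (2 * Real.pi))⁻¹ * ∫ y in Set.Iic x, Real.exp (-(y ^ 2) / 2)

/-- Black–Scholes call price with zero interest and dividend rates. -/
noncomputable def bsCall (S K τ σ : ℝ) : ℝ :=
  let d1 := (Real.log (S / K) + σ ^ 2 * τ / 2) / (σ * Real.sqrt τ)
  S * stdNormalCDF d1 - K * stdNormalCDF (d1 - σ * Real.sqrt τ)

/-- Black–Scholes put price with zero interest and dividend rates. -/
noncomputable def bsPut (S K τ σ : ℝ) : ℝ := bsCall S K τ σ - S + K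

/-- The denominator appearing in the PCLVG call price formula. -/
noncomputable def pclvgD (σ1 σ2 U τ : ℝ) : ℝ :=
  1 / σ1 + 1 / σ2 - (1 / σ2 - 1 / σ1) * Real.exp (-2 * U / (σ1 * τ))

/-- The explicit PCLVG call price `C^σ(U,K,τ)`. -/
noncomputable def pclvgCall (σ1 σ2 U K τ : ℝ) : ℝ :=
  if K < U then
    (U - K) +
      τ * Real.exp (-(U - K) / (σ1 * τ)) * (1 - Real.exp (-2 * K / (σ1 * τ))) /
        pclvgD σ1 σ2 U τ
  else
    τ * Real.exp (-(K - U) / (σ2 * τ)) * (1 - Real.exp (-2 * U / (σ1 * τ))) /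
      pclvgD σ1 σ2 U τ

/-- The PCLVG put price `P^σ(U,K,τ) = C^σ(U,K,τ) − (U − K)`. -/
noncomputable def pclvgPut (σ1 σ2 U K τ : ℝ) : ℝ := pclvgCall σ1 σ2 U K τ - (U - K)

/-- Black–Scholes call price extended to zero time-to-maturity by its intrinsic value. -/
noncomputable def bsCallExt (S K τ σ : ℝ) : ℝ :=
  if τ = 0 then max (S - K) 0 else bsCall S K τ σ

/-- Black–Scholes put price extended to zero time-to-maturity by its intrinsic value. -/
noncomputable def bsPutExt (S K τ σ : ℝ) : ℝ :=
  if τ = 0 then max (K - S) 0 else bsPut S K τ σ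

namespace RobustUOP

theorem hasDerivAt_integral_Iic {f : ℝ → ℝ} (hint : Integrable f) (hcont : Continuous f)
    (x : ℝ) : HasDerivAt (fun u => ∫ y in Iic u, f y) (f x) x := by
  have hsplit : ∀ u, ∫ y in Iic u, f y = (∫ y in Iic 0, f y) + ∫ y in (0 : ℝ)..u, f y :=
    fun u => by
      rw [← intervalIntegral.integral_Iic_sub_Iic hint.integrableOn hint.integrableOn]; ring
  rw [show (fun u => ∫ y in Iic u, f y) = _ from funext hsplit]
  exact (intervalIntegral.integral_hasDerivAt_right hint.intervalIntegrable
    (hcont.stronglyMeasurableAtFilter _ _) hcont.continuousAt).const_add _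

noncomputable def stdNormalPDF (x : ℝ) : ℝ :=
  (Real.sqrt (2 * Real.pi))⁻¹ * Real.exp (-(x ^ 2) / 2)

theorem stdNormalPDF_pos (x : ℝ) : 0 < stdNormalPDF x := by
  have : 0 < Real.sqrt (2 * Real.pi) := Real.sqrt_pos.2 (by positivity)
  unfold stdNormalPDF; positivity

theorem hasDerivAt_stdNormalCDF (x : ℝ) : HasDerivAt stdNormalCDF (stdNormalPDF x) x := by
  have hint : Integrable fun y : ℝ => Real.exp (-(y ^ 2) / 2) := by
    simpa [neg_div, div_eq_inv_mul] using
      integrable_exp_neg_mul_sq (by norm_num : (0 : ℝ) < 1 / 2)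
  exact (hasDerivAt_integral_Iic hint (by fun_prop) x).const_mul _

noncomputable def bsCallTotalVol (S K v : ℝ) : ℝ :=
  S * stdNormalCDF (Real.log (S / K) / v + v / 2) -
    K * stdNormalCDF (Real.log (S / K) / v - v / 2)

theorem bsCall_eq_bsCallTotalVol {S K τ σ : ℝ} (hτ : 0 < τ) (hσ : 0 < σ) :
    bsCall S K τ σ = bsCallTotalVol S K (σ * Real.sqrt τ) := by
  have hv : σ * Real.sqrt τ ≠ 0 := by positivity
  have hd1 : (Real.log (S / K) + σ ^ 2 * τ / 2) / (σ * Real.sqrt τ)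
      = Real.log (S / K) / (σ * Real.sqrt τ) + σ * Real.sqrt τ / 2 := by
    have hv2 : (σ * Real.sqrt τ) ^ 2 = σ ^ 2 * τ := by rw [mul_pow, Real.sq_sqrt hτ.le]
    rw [← hv2]; field_simp
  simp only [bsCall, bsCallTotalVol, hd1]
  ring_nf

theorem mul_stdNormalPDF_sub_eq {S K v : ℝ} (hS : 0 < S) (hK : 0 < K) (hv : v ≠ 0) :
    K * stdNormalPDF (Real.log (S / K) / v - v / 2) =
      S * stdNormalPDF (Real.log (S / K) / v + v / 2) := by
  set m := Real.log (S / K)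
  have hexp : -((m / v + v / 2) ^ 2) / 2 = -((m / v - v / 2) ^ 2) / 2 + -m := by
    field_simp; ring
  have hSm : S * Real.exp (-m) = K := by
    rw [Real.exp_neg, Real.exp_log (div_pos hS hK)]; field_simp
  rw [stdNormalPDF, stdNormalPDF, hexp, Real.exp_add, ← hSm]
  ring

/-- The two chain-rule terms combine because `K φ(d₂) = S φ(d₁)` and `d₁ - d₂ = v`. -/
theorem hasDerivAt_bsCallTotalVol {S K v : ℝ} (hS : 0 < S) (hK : 0 < K) (hv : v ≠ 0) :
    HasDerivAt (bsCallTotalVol S K)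
      (S * stdNormalPDF (Real.log (S / K) / v + v / 2)) v := by
  have hpdf := mul_stdNormalPDF_sub_eq hS hK hv
  set m := Real.log (S / K)
  have hm : HasDerivAt (fun v : ℝ => m / v) (m * -(v ^ 2)⁻¹) v := by
    simpa [div_eq_mul_inv] using (hasDerivAt_inv hv).const_mul m
  have hd1 := hm.add ((hasDerivAt_id v).div_const 2)
  have hd2 := hm.sub ((hasDerivAt_id v).div_const 2)
  have H := (((hasDerivAt_stdNormalCDF _).comp v hd1).const_mul S).sub
    (((hasDerivAt_stdNormalCDF _).comp v hd2).const_mul K)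
  simp only [Pi.add_apply, Pi.sub_apply, id] at H
  refine H.congr_deriv ?_
  linear_combination (1 / 2 - m * -(v ^ 2)⁻¹) * hpdf

theorem monotoneOn_bsCallTotalVol {S K : ℝ} (hS : 0 < S) (hK : 0 < K) :
    MonotoneOn (bsCallTotalVol S K) (Ioi 0) := by
  have hd : ∀ v ∈ Ioi (0 : ℝ), HasDerivAt (bsCallTotalVol S K)
      (S * stdNormalPDF (Real.log (S / K) / v + v / 2)) v :=
    fun v hv => hasDerivAt_bsCallTotalVol hS hK (ne_of_gt hv)
  refine monotoneOn_of_deriv_nonneg (convex_Ioi 0)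
    (fun v hv => (hd v hv).continuousAt.continuousWithinAt) ?_ ?_ <;> rw [interior_Ioi]
  · exact fun v hv => (hd v hv).differentiableAt.differentiableWithinAt
  · exact fun v hv => (hd v hv).deriv ▸ (mul_pos hS (stdNormalPDF_pos _)).le

theorem bsCall_le_bsCall_of_le {S K τ σ σ' : ℝ} (hS : 0 < S) (hK : 0 < K) (hτ : 0 < τ)
    (hσ : 0 < σ) (hσσ' : σ ≤ σ') : bsCall S K τ σ ≤ bsCall S K τ σ' := by
  have hσ' : 0 < σ' := hσ.trans_le hσσ'
  have hsqrt : 0 < Real.sqrt τ := Real.sqrt_pos.2 hτ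
  rw [bsCall_eq_bsCallTotalVol hτ hσ, bsCall_eq_bsCallTotalVol hτ hσ']
  exact monotoneOn_bsCallTotalVol hS hK (mem_Ioi.2 (by positivity)) (mem_Ioi.2 (by positivity))
    (mul_le_mul_of_nonneg_right hσσ' hsqrt.le)

theorem bsPut_le_bsPut_of_le {S K τ σ σ' : ℝ} (hS : 0 < S) (hK : 0 < K) (hτ : 0 < τ)
    (hσ : 0 < σ) (hσσ' : σ ≤ σ') : bsPut S K τ σ ≤ bsPut S K τ σ' := by
  unfold bsPut
  linarith [bsCall_le_bsCall_of_le hS hK hτ hσ hσσ']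

theorem bsCall_mul_vol {S K τ σ c : ℝ} (hc : 0 ≤ c) :
    bsCall S K τ (c * σ) = bsCall S K (c ^ 2 * τ) σ := by
  rw [bsCall, bsCall, Real.sqrt_mul (sq_nonneg c), Real.sqrt_sq hc]
  ring_nf

theorem pclvgD_pos {σ1 σ2 U τ : ℝ} (h1 : 0 < σ1) (h2 : 0 < σ2) (hU : 0 < U) (hτ : 0 < τ) :
    0 < pclvgD σ1 σ2 U τ := by
  have hE : Real.exp (-2 * U / (σ1 * τ)) < 1 :=
    Real.exp_lt_one_iff.2 (div_neg_of_neg_of_pos (by linarith) (by positivity))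
  have hE0 := Real.exp_pos (-2 * U / (σ1 * τ))
  have ha : 0 < 1 / σ1 := by positivity
  have hb : 0 < 1 / σ2 := by positivity
  rw [pclvgD]
  nlinarith [mul_pos ha hE0, mul_pos hb (sub_pos.2 hE)]

theorem exp_mul_le_one_sub_add_mul_exp {t : ℝ} (ht0 : 0 ≤ t) (ht1 : t ≤ 1) (x : ℝ) :
    Real.exp (t * x) ≤ 1 - t + t * Real.exp x := by
  simpa using convexOn_exp.2 (mem_univ 0) (mem_univ x) (sub_nonneg.2 ht1) ht0 (by ring)

theorem lt_of_add_mul_div_le {σ1 σ2 U Ki Kj : ℝ} (h1 : 0 < σ1) (h2 : 0 < σ2) (hKiU : Ki < U)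
    (hjb : U + (U - Ki) * σ2 / σ1 ≤ Kj) : U < Kj :=
  (lt_add_of_pos_right U (div_pos (mul_pos (sub_pos.2 hKiU) h2) h1)).trans_le hjb

/-- The choice of `Kj` makes the call's exponential decay beyond `U` at least as fast as the
put's below `U`; the remaining factor is handled by convexity of `exp`. -/
theorem div_mul_pclvgCall_le_pclvgPut {σ1 σ2 U Ki Kj τ : ℝ} (h1 : 0 < σ1) (h2 : 0 < σ2)
    (hU : 0 < U) (hKi : 0 < Ki) (hKiU : Ki < U) (hjb : U + (U - Ki) * σ2 / σ1 ≤ Kj)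
    (hτ : 0 < τ) :
    Ki / U * pclvgCall σ1 σ2 U Kj τ ≤ pclvgPut σ1 σ2 U Ki τ := by
  have hjU := lt_of_add_mul_div_le h1 h2 hKiU hjb
  have hput : pclvgPut σ1 σ2 U Ki τ = τ * Real.exp (-(U - Ki) / (σ1 * τ)) *
      (1 - Real.exp (-2 * Ki / (σ1 * τ))) / pclvgD σ1 σ2 U τ := by
    rw [pclvgPut, pclvgCall, if_pos hKiU]; ring
  rw [hput, pclvgCall, if_neg hjU.le.not_gt, mul_div_assoc',
    div_le_div_iff_of_pos_right (pclvgD_pos h1 h2 hU hτ)]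
  have hdecay : Real.exp (-(Kj - U) / (σ2 * τ)) ≤ Real.exp (-(U - Ki) / (σ1 * τ)) := by
    have hjb' : (U - Ki) * σ2 ≤ (Kj - U) * σ1 := by
      have := (div_le_iff₀ h1).1 (le_sub_iff_add_le'.2 hjb); linarith
    rw [Real.exp_le_exp, neg_div, neg_div, neg_le_neg_iff,
      div_le_div_iff₀ (by positivity) (by positivity)]
    nlinarith
  have hratio : 0 ≤ Ki / U := by positivity
  have hconc : Ki / U * (1 - Real.exp (-2 * U / (σ1 * τ))) ≤
      1 - Real.exp (-2 * Ki / (σ1 * τ)) := by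
    have h := exp_mul_le_one_sub_add_mul_exp hratio ((div_le_one hU).2 hKiU.le)
      (-2 * U / (σ1 * τ))
    rw [show Ki / U * (-2 * U / (σ1 * τ)) = -2 * Ki / (σ1 * τ) by field_simp] at h
    linarith
  have hE : 0 ≤ 1 - Real.exp (-2 * U / (σ1 * τ)) :=
    sub_nonneg.2 (Real.exp_le_one_iff.2 (div_nonpos_of_nonpos_of_nonneg (by linarith)
      (by positivity)))
  calc Ki / U * (τ * Real.exp (-(Kj - U) / (σ2 * τ)) * (1 - Real.exp (-2 * U / (σ1 * τ))))
      = τ * Real.exp (-(Kj - U) / (σ2 * τ)) * (Ki / U * (1 - Real.exp (-2 * U / (σ1 * τ)))) := by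
        ring
    _ ≤ τ * Real.exp (-(U - Ki) / (σ1 * τ)) * (1 - Real.exp (-2 * Ki / (σ1 * τ))) :=
        mul_le_mul (mul_le_mul_of_nonneg_left hdecay hτ.le) hconc
          (mul_nonneg hratio hE) (by positivity)

def IsPCLVGImpliedVol (σ1 σ2 U : ℝ) (IVstar : ℝ → ℝ → ℝ) : Prop :=
  ∀ K' τ : ℝ, 0 < K' → 0 < τ → 0 < IVstar K' τ ∧
    bsCall U K' τ (IVstar K' τ) = pclvgCall σ1 σ2 U K' τ

theorem div_mul_bsCall_le_bsPut_of_upper_beliefs {σ1 σ2 U Ki Kj τ c σi σj : ℝ}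
    {IVstar : ℝ → ℝ → ℝ} (h1 : 0 < σ1) (h2 : 0 < σ2) (hU : 0 < U) (hKi : 0 < Ki)
    (hKiU : Ki < U) (hjb : U + (U - Ki) * σ2 / σ1 ≤ Kj) (hτ : 0 < τ) (hc : 0 < c)
    (hIV : IsPCLVGImpliedVol σ1 σ2 U IVstar) (hσj : 0 < σj)
    (hi : c * IVstar Ki (c ^ 2 * τ) ≤ σi) (hj : σj ≤ c * IVstar Kj (c ^ 2 * τ)) :
    Ki / U * bsCall U Kj τ σj ≤ bsPut U Ki τ σi := by
  have hKj : 0 < Kj := hU.trans (lt_of_add_mul_div_le h1 h2 hKiU hjb)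
  have hcτ : 0 < c ^ 2 * τ := by positivity
  obtain ⟨hsi, hcali⟩ := hIV Ki _ hKi hcτ
  obtain ⟨-, hcalj⟩ := hIV Kj _ hKj hcτ
  calc Ki / U * bsCall U Kj τ σj
      ≤ Ki / U * bsCall U Kj τ (c * IVstar Kj (c ^ 2 * τ)) :=
        mul_le_mul_of_nonneg_left (bsCall_le_bsCall_of_le hU hKj hτ hσj hj) (by positivity)
    _ = Ki / U * pclvgCall σ1 σ2 U Kj (c ^ 2 * τ) := by rw [bsCall_mul_vol hc.le, hcalj]
    _ ≤ pclvgPut σ1 σ2 U Ki (c ^ 2 * τ) :=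
        div_mul_pclvgCall_le_pclvgPut h1 h2 hU hKi hKiU hjb hcτ
    _ = bsPut U Ki τ (c * IVstar Ki (c ^ 2 * τ)) := by
        rw [bsPut, bsCall_mul_vol hc.le, hcali, pclvgPut]; ring
    _ ≤ bsPut U Ki τ σi := bsPut_le_bsPut_of_le hU hKi hτ (mul_pos hc hsi) hi

theorem div_mul_bsCallExt_le_bsPutExt_at_barrier {U Ki Kj τ σi σj : ℝ} (hKiU : Ki ≤ U)
    (hUKj : U ≤ Kj) (hτ : 0 ≤ τ)
    (h : 0 < τ → Ki / U * bsCall U Kj τ σj ≤ bsPut U Ki τ σi) :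
    Ki / U * bsCallExt U Kj τ σj ≤ bsPutExt U Ki τ σi := by
  rcases hτ.eq_or_lt with rfl | hτ
  · simp [bsCallExt, bsPutExt, hKiU, hUKj]
  · rw [bsCallExt, bsPutExt, if_neg hτ.ne', if_neg hτ.ne']
    exact h hτ

/-- The right-hand side is the chord of `s ↦ (K - s)⁺` between `Ki` and `U`, continued with
slope `-1` below `Ki`. -/
theorem max_sub_le_static_portfolio {Ki K U s : ℝ} (hiK : Ki ≤ K) (hiU : Ki < U) (hKU : K ≤ U)
    (hs : s ≤ U) :
    max (K - s) 0 ≤ (Ki - K) / (U - Ki) * (s - U) + (U - K) / (U - Ki) * max (Ki - s) 0 := by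
  rw [div_mul_eq_mul_div, div_mul_eq_mul_div, ← add_div, le_div_iff₀ (sub_pos.2 hiU)]
  rcases le_total s Ki with hsKi | hsKi
  · rw [max_eq_left (by linarith : (0 : ℝ) ≤ Ki - s), max_eq_left (by linarith : (0 : ℝ) ≤ K - s)]
    nlinarith
  · rw [max_eq_right (by linarith : Ki - s ≤ 0)]
    rcases le_total s K with hsK | hsK
    · rw [max_eq_left (by linarith : (0 : ℝ) ≤ K - s)]
      nlinarith [mul_nonneg (sub_nonneg.2 hKU) (sub_nonneg.2 hsKi)]
    · rw [max_eq_right (by linarith : K - s ≤ 0)]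
      nlinarith [mul_nonneg (sub_nonneg.2 hiK) (sub_nonneg.2 hs)]

theorem _root_.ContinuousOn.csInf_hitting_mem_Icc_and_apply_eq {f : ℝ → ℝ} {a b U : ℝ}
    (hf : ContinuousOn f (Icc a b)) (ha : f a ≤ U) (hne : {t | t ∈ Icc a b ∧ U ≤ f t}.Nonempty) :
    sInf {t | t ∈ Icc a b ∧ U ≤ f t} ∈ Icc a b ∧ f (sInf {t | t ∈ Icc a b ∧ U ≤ f t}) = U := by
  set A := {t | t ∈ Icc a b ∧ U ≤ f t}
  have hbdd : BddBelow A := ⟨a, fun t ht => ht.1.1⟩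
  have hmem : sInf A ∈ A :=
    (hf.preimage_isClosed_of_isClosed isClosed_Icc isClosed_Ici).csInf_mem hne hbdd
  refine ⟨hmem.1, le_antisymm ?_ hmem.2⟩
  obtain ⟨t, ht, hft⟩ := intermediate_value_Icc hmem.1.1
    (hf.mono (Icc_subset_Icc_right hmem.1.2)) ⟨ha, hmem.2⟩
  have hHt : sInf A ≤ t := csInf_le hbdd ⟨⟨ht.1, ht.2.trans hmem.1.2⟩, hft.ge⟩
  rw [← le_antisymm ht.2 hHt, hft]

end RobustUOP

open RobustUOP

open Classical

theorem robust_uop_super_replication_general (n : ℕ) (Ks : Fin n → ℝ)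
    (hKspos : ∀ j, 0 < Ks j)
    (T U K : ℝ) (hT : 0 < T) (hU : 0 < U) (hKU : K ≤ U)
    (σs1 σs2 : ℝ) (h1 : 0 < σs1) (h2 : 0 < σs2)
    (IVstar : ℝ → ℝ → ℝ)
    (hIVstar : ∀ K' τ : ℝ, 0 < K' → 0 < τ → 0 < IVstar K' τ ∧
      bsCall U K' τ (IVstar K' τ) = pclvgCall σs1 σs2 U K' τ)
    (i jbar : Fin n) (hiK : Ks i ≤ K) (hiU : Ks i < U)
    (hjbar1 : U + (U - Ks i) * σs2 / σs1 ≤ Ks jbar)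
    (S : ℝ → ℝ) (hS : ContinuousOn S (Set.Icc 0 T))
    (hS0U : S 0 ≤ U)
    (IV : ℝ → Fin n → ℝ → ℝ)
    (hIVpos : ∀ t : ℝ, 0 ≤ t → t < T → ∀ j τ, 0 < τ → τ ≤ T - t → 0 < IV t j τ)
    (hbeliefs : ∀ t : ℝ, 0 ≤ t → t < T → S t = U →
      ∃ c : ℝ, 0 < c ∧ ∀ τ : ℝ, 0 < τ → τ ≤ T - t →
        (∀ i', Ks i' < U → c * IVstar (Ks i') (c ^ 2 * τ) ≤ IV t i' τ) ∧
        (∀ j, U < Ks j → IV t j τ ≤ c * IVstar (Ks j) (c ^ 2 * τ))) :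
    (Ks i - K) / (U - Ks i) *
        (S (if {t : ℝ | t ∈ Set.Icc 0 T ∧ U ≤ S t}.Nonempty
              then min (sInf {t : ℝ | t ∈ Set.Icc 0 T ∧ U ≤ S t}) T else T) - U) +
      (U - K) / (U - Ks i) *
        (bsPutExt
            (S (if {t : ℝ | t ∈ Set.Icc 0 T ∧ U ≤ S t}.Nonempty
                  then min (sInf {t : ℝ | t ∈ Set.Icc 0 T ∧ U ≤ S t}) T else T))
            (Ks i)
            (T - (if {t : ℝ | t ∈ Set.Icc 0 T ∧ U ≤ S t}.Nonempty
                    then min (sInf {t : ℝ | t ∈ Set.Icc 0 T ∧ U ≤ S t}) T else T))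
            (IV (if {t : ℝ | t ∈ Set.Icc 0 T ∧ U ≤ S t}.Nonempty
                   then min (sInf {t : ℝ | t ∈ Set.Icc 0 T ∧ U ≤ S t}) T else T) i
              (T - (if {t : ℝ | t ∈ Set.Icc 0 T ∧ U ≤ S t}.Nonempty
                      then min (sInf {t : ℝ | t ∈ Set.Icc 0 T ∧ U ≤ S t}) T else T))) -
          Ks i / U *
            bsCallExt
              (S (if {t : ℝ | t ∈ Set.Icc 0 T ∧ U ≤ S t}.Nonempty
                    then min (sInf {t : ℝ | t ∈ Set.Icc 0 T ∧ U ≤ S t}) T else T))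
              (Ks jbar)
              (T - (if {t : ℝ | t ∈ Set.Icc 0 T ∧ U ≤ S t}.Nonempty
                      then min (sInf {t : ℝ | t ∈ Set.Icc 0 T ∧ U ≤ S t}) T else T))
              (IV (if {t : ℝ | t ∈ Set.Icc 0 T ∧ U ≤ S t}.Nonempty
                     then min (sInf {t : ℝ | t ∈ Set.Icc 0 T ∧ U ≤ S t}) T else T) jbar
                (T - (if {t : ℝ | t ∈ Set.Icc 0 T ∧ U ≤ S t}.Nonempty
                        then min (sInf {t : ℝ | t ∈ Set.Icc 0 T ∧ U ≤ S t}) T else T)))) ≥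
      max
        (K - S (if {t : ℝ | t ∈ Set.Icc 0 T ∧ U ≤ S t}.Nonempty
                  then min (sInf {t : ℝ | t ∈ Set.Icc 0 T ∧ U ≤ S t}) T else T)) 0 *
        (if {t : ℝ | t ∈ Set.Icc 0 T ∧ U ≤ S t} = ∅ then 1 else 0) := by
  set A := {t : ℝ | t ∈ Set.Icc 0 T ∧ U ≤ S t}
  have hjU : U < Ks jbar := lt_of_add_mul_div_le h1 h2 hiU hjbar1
  by_cases hne : A.Nonempty
  · obtain ⟨⟨hH0, hHT⟩, hSH⟩ := hS.csInf_hitting_mem_Icc_and_apply_eq hS0U hne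
    rw [if_pos hne, min_eq_left hHT, if_neg hne.ne_empty, mul_zero, hSH, sub_self, mul_zero,
      zero_add, ge_iff_le]
    refine mul_nonneg (div_nonneg (by linarith) (by linarith)) (sub_nonneg.2 ?_)
    refine div_mul_bsCallExt_le_bsPutExt_at_barrier hiU.le hjU.le (by linarith) fun hτ => ?_
    have hHT' : sInf A < T := by linarith
    obtain ⟨c, hc, hcb⟩ := hbeliefs _ hH0 hHT' hSH
    obtain ⟨hput, hcall⟩ := hcb _ hτ le_rfl
    exact div_mul_bsCall_le_bsPut_of_upper_beliefs h1 h2 hU (hKspos i) hiU hjbar1 hτ hc hIVstar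
      (hIVpos _ hH0 hHT' jbar _ hτ le_rfl) (hput i hiU) (hcall jbar hjU)
  · have hST : S T < U := not_le.1 fun h => hne ⟨T, ⟨hT.le, le_rfl⟩, h⟩
    rw [if_neg hne, if_pos (not_nonempty_iff_eq_empty.1 hne), mul_one, sub_self, bsPutExt,
      bsCallExt, if_pos rfl, if_pos rfl, max_eq_right (by linarith : S T - Ks jbar ≤ 0),
      mul_zero, sub_zero]
    exact max_sub_le_static_portfolio hiK hiU hKU hST.le

/-- Robust super-replication of the up-and-out put (Proposition 6.1 of the
paper): along any continuous path satisfying the upper beliefs on implied skewness whenever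
the spot is at the barrier, the liquidation value at `θ = min(H_U, T)` of the improved
Brown–Hobson–Rogers portfolio (forwards, puts struck at `K_i`, and short calls struck at
`K_{j̄}`) dominates the payoff of the up-and-out put. -/
theorem robust_uop_super_replication (n : ℕ) (Ks : Fin n → ℝ)
    (hKspos : ∀ j, 0 < Ks j) (hKsmono : StrictMono Ks)
    (T U K : ℝ) (hT : 0 < T) (hU : 0 < U) (hK : 0 < K) (hKU : K ≤ U)
    (σs1 σs2 : ℝ) (h1 : 0 < σs1) (h2 : 0 < σs2)
    (IVstar : ℝ → ℝ → ℝ)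
    (hIVstar : ∀ K' τ : ℝ, 0 < K' → 0 < τ → 0 < IVstar K' τ ∧
      bsCall U K' τ (IVstar K' τ) = pclvgCall σs1 σs2 U K' τ)
    (i jbar : Fin n) (hiK : Ks i ≤ K) (hiU : Ks i < U)
    (hjbar1 : U + (U - Ks i) * σs2 / σs1 ≤ Ks jbar)
    (hjbar2 : ∀ j, U + (U - Ks i) * σs2 / σs1 ≤ Ks j → Ks jbar ≤ Ks j)
    (S : ℝ → ℝ) (hS : ContinuousOn S (Set.Icc 0 T))
    (hS0 : 0 ≤ S 0) (hS0U : S 0 ≤ U)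
    (IV : ℝ → Fin n → ℝ → ℝ)
    (hIVpos : ∀ t : ℝ, 0 ≤ t → t < T → ∀ j τ, 0 < τ → τ ≤ T - t → 0 < IV t j τ)
    (hbeliefs : ∀ t : ℝ, 0 ≤ t → t < T → S t = U →
      ∃ c : ℝ, 0 < c ∧ ∀ τ : ℝ, 0 < τ → τ ≤ T - t →
        (∀ i', Ks i' < U → c * IVstar (Ks i') (c ^ 2 * τ) ≤ IV t i' τ) ∧
        (∀ j, U < Ks j → IV t j τ ≤ c * IVstar (Ks j) (c ^ 2 * τ))) :
    (Ks i - K) / (U - Ks i) *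
        (S (if {t : ℝ | t ∈ Set.Icc 0 T ∧ U ≤ S t}.Nonempty
              then min (sInf {t : ℝ | t ∈ Set.Icc 0 T ∧ U ≤ S t}) T else T) - U) +
      (U - K) / (U - Ks i) *
        (bsPutExt
            (S (if {t : ℝ | t ∈ Set.Icc 0 T ∧ U ≤ S t}.Nonempty
                  then min (sInf {t : ℝ | t ∈ Set.Icc 0 T ∧ U ≤ S t}) T else T))
            (Ks i)
            (T - (if {t : ℝ | t ∈ Set.Icc 0 T ∧ U ≤ S t}.Nonempty
                    then min (sInf {t : ℝ | t ∈ Set.Icc 0 T ∧ U ≤ S t}) T else T))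
            (IV (if {t : ℝ | t ∈ Set.Icc 0 T ∧ U ≤ S t}.Nonempty
                   then min (sInf {t : ℝ | t ∈ Set.Icc 0 T ∧ U ≤ S t}) T else T) i
              (T - (if {t : ℝ | t ∈ Set.Icc 0 T ∧ U ≤ S t}.Nonempty
                      then min (sInf {t : ℝ | t ∈ Set.Icc 0 T ∧ U ≤ S t}) T else T))) -
          Ks i / U *
            bsCallExt
              (S (if {t : ℝ | t ∈ Set.Icc 0 T ∧ U ≤ S t}.Nonempty
                    then min (sInf {t : ℝ | t ∈ Set.Icc 0 T ∧ U ≤ S t}) T else T))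
              (Ks jbar)
              (T - (if {t : ℝ | t ∈ Set.Icc 0 T ∧ U ≤ S t}.Nonempty
                      then min (sInf {t : ℝ | t ∈ Set.Icc 0 T ∧ U ≤ S t}) T else T))
              (IV (if {t : ℝ | t ∈ Set.Icc 0 T ∧ U ≤ S t}.Nonempty
                     then min (sInf {t : ℝ | t ∈ Set.Icc 0 T ∧ U ≤ S t}) T else T) jbar
                (T - (if {t : ℝ | t ∈ Set.Icc 0 T ∧ U ≤ S t}.Nonempty
                        then min (sInf {t : ℝ | t ∈ Set.Icc 0 T ∧ U ≤ S t}) T else T)))) ≥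
      max
        (K - S (if {t : ℝ | t ∈ Set.Icc 0 T ∧ U ≤ S t}.Nonempty
                  then min (sInf {t : ℝ | t ∈ Set.Icc 0 T ∧ U ≤ S t}) T else T)) 0 *
        (if {t : ℝ | t ∈ Set.Icc 0 T ∧ U ≤ S t} = ∅ then 1 else 0) :=
  robust_uop_super_replication_general n Ks hKspos T U K hT hU hKU σs1 σs2 h1 h2 IVstar hIVstar i
    jbar hiK hiU hjbar1 S hS hS0U IV hIVpos hbeliefs
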